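/- arXiv:2210.12821 — 2 statements merged into one kernel-verified Lean document; each statement's English description precedes it below -/
import Mathlib

section
/- Let q = 2^(2m) with m ≥ 1. Then there is no β ∈ F_q for which the cubic polynomial t³ + βt² + 1 has exactly two roots in F_q, and the number of β ∈ F_q for which it has exactly one root in F_q equals the number of β ∈ F_q with Tr(β³) = 1. -/
/-!
Write `N(β)` for the number of roots of `t³ + βt² + 1`. A root `t` is nonzero and
determines `β = (t³ + 1) / t²`, so `∑ N(β) = q - 1`. If `t ≠ t'` are roots, so is
`-β - t - t'`, and in characteristic two it differs from both; hence `N(β) ∈ {0, 1, 3}`.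
Eliminating `β`, the roots `t' ≠ t` of the cubic through a root `t` correspond to the
solutions `x = t² t'` of `x² + x = t³`, and by Artin–Schreier these are two or none according
as `Tr (t³)` is `0` or `1`. So `∑ N(β) (N(β) - 1) = 2 #{t ≠ 0 | Tr (t³) = 0}`, and since
`2 [N = 1] = 2N - N(N - 1)` on `{0, 1, 3}`,
`#{β | N(β) = 1} = (q - 1) - #{t ≠ 0 | Tr (t³) = 0} = #{β | Tr (β³) = 1}`.
-/

open Finset

section ArtinSchreier

variable {F : Type*} [Field F]

variable (F) in
def artinSchreier [CharP F 2] : F →+ F where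
  toFun x := x ^ 2 + x
  map_zero' := by ring
  map_add' x y := by rw [CharTwo.add_sq]; ring

theorem card_sq_add_self_eq_zero [Fintype F] [DecidableEq F] : #{x : F | x ^ 2 + x = 0} = 2 := by
  have : ({x : F | x ^ 2 + x = 0} : Finset F) = {0, -1} := by
    ext x
    simp only [mem_filter, mem_univ, true_and, mem_insert, mem_singleton]
    rw [show x ^ 2 + x = x * (x + 1) by ring, mul_eq_zero, add_eq_zero_iff_eq_neg]
  rw [this, card_pair (neg_ne_zero.mpr one_ne_zero).symm]

theorem zmod_two_ne_zero_iff_eq_one (a : ZMod 2) : ¬a = 0 ↔ a = 1 := by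
  revert a; decide

variable [Fintype F] [Algebra (ZMod 2) F]

local notation "Tr" => Algebra.trace (ZMod 2) F

theorem trace_zmod_two_sq (x : F) : Tr (x ^ 2) = Tr x := by
  simpa [ZMod.card] using
    Algebra.trace_eq_of_algEquiv (FiniteField.frobeniusAlgEquivOfAlgebraic (ZMod 2) F) x

theorem trace_zmod_two_sq_add_self (x : F) : Tr (x ^ 2 + x) = 0 := by
  rw [map_add, trace_zmod_two_sq, CharTwo.add_self_eq_zero]

theorem exists_trace_zmod_two_eq_one : ∃ b : F, Tr b = 1 := by
  obtain ⟨b, hb⟩ := not_forall.mp fun h => Algebra.trace_ne_zero (ZMod 2) F (LinearMap.ext h)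
  exact ⟨b, (zmod_two_ne_zero_iff_eq_one _).mp hb⟩

theorem two_mul_card_trace_zmod_two_eq_zero : 2 * #{x : F | Tr x = 0} = Fintype.card F := by
  obtain ⟨b, hb⟩ := exists_trace_zmod_two_eq_one (F := F)
  have hfib : #{x : F | Tr x = 0} = #{x : F | Tr x = 1} :=
    AddMonoidHom.card_fiber_eq_of_mem_range (Tr).toAddMonoidHom ⟨0, map_zero _⟩ ⟨b, hb⟩
  have := card_filter_add_card_filter_not (s := univ) (fun x : F => Tr x = 0)
  simp only [zmod_two_ne_zero_iff_eq_one, ← hfib, card_univ] at this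
  omega

variable [DecidableEq F]

theorem exists_sq_add_self_eq_iff (c : F) : (∃ x : F, x ^ 2 + x = c) ↔ Tr c = 0 := by
  have : CharP F 2 := charP_of_injective_algebraMap' (ZMod 2) 2
  refine ⟨fun ⟨x, hx⟩ => hx ▸ trace_zmod_two_sq_add_self x, fun hc => ?_⟩
  set I := univ.image fun x : F => x ^ 2 + x
  set K : Finset F := {y : F | Tr y = 0}
  have hIK : I ⊆ K := by
    simp only [I, K, subset_iff, mem_image, mem_univ, true_and, mem_filter]
    rintro _ ⟨x, rfl⟩
    exact trace_zmod_two_sq_add_self x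
  have hI : 2 * #I = Fintype.card F := by
    rw [← card_univ, card_eq_sum_card_image (fun x : F => x ^ 2 + x) univ, mul_comm,
      ← smul_eq_mul, ← sum_const]
    refine sum_congr rfl fun d hd => ?_
    obtain ⟨x, -, rfl⟩ := mem_image.mp hd
    exact ((AddMonoidHom.card_fiber_eq_of_mem_range (artinSchreier F) ⟨x, rfl⟩
      ⟨0, map_zero _⟩).trans card_sq_add_self_eq_zero).symm
  have hK : 2 * #K = Fintype.card F := two_mul_card_trace_zmod_two_eq_zero
  have : c ∈ I := eq_of_subset_of_card_le hIK (by omega) ▸ (by simpa [K] : c ∈ K)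
  simpa [I] using this

theorem card_sq_add_self_eq (c : F) :
    #{x : F | x ^ 2 + x = c} = if Tr c = 0 then 2 else 0 := by
  have : CharP F 2 := charP_of_injective_algebraMap' (ZMod 2) 2
  split_ifs with hc
  · obtain ⟨x, rfl⟩ := (exists_sq_add_self_eq_iff c).mpr hc
    exact (AddMonoidHom.card_fiber_eq_of_mem_range (artinSchreier F) ⟨x, rfl⟩
      ⟨0, map_zero _⟩).trans card_sq_add_self_eq_zero
  · rw [card_eq_zero, filter_eq_empty_iff]
    exact fun x _ hx => hc ((exists_sq_add_self_eq_iff c).mp ⟨x, hx⟩)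

end ArtinSchreier

section Cubic

variable {F : Type*} [Field F] [Fintype F] [DecidableEq F]

def cubicRoots (β : F) : Finset F := {t | t ^ 3 + β * t ^ 2 + 1 = 0}

@[simp]
theorem mem_cubicRoots {β t : F} : t ∈ cubicRoots β ↔ t ^ 3 + β * t ^ 2 + 1 = 0 := by
  simp [cubicRoots]

theorem card_cubicRoots_le_three (β : F) : #(cubicRoots β) ≤ 3 := by
  open Polynomial in
  have hdeg : (X ^ 3 + C β * X ^ 2 + 1 : F[X]).natDegree = 3 := by compute_degree!
  refine hdeg ▸ card_le_degree_of_subset_roots fun t ht => ?_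
  rw [mem_roots (ne_zero_of_natDegree_gt (n := 0) (by omega))]
  simpa using mem_cubicRoots.mp ht

theorem neg_sub_sub_mem_cubicRoots {β t t' : F} (ht : t ∈ cubicRoots β)
    (ht' : t' ∈ cubicRoots β) (hne : t ≠ t') : -β - t - t' ∈ cubicRoots β := by
  rw [mem_cubicRoots] at *
  have h : (t - t') * ((-β - t - t') ^ 3 + β * (-β - t - t') ^ 2 + 1) = 0 := by
    linear_combination (-β - t - 2 * t') * ht - (-β - 2 * t - t') * ht'
  exact (mul_eq_zero.mp h).resolve_left (sub_ne_zero.mpr hne)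

theorem mem_cubicRoots_iff_of_mem {β t t' : F} (ht : t ∈ cubicRoots β) :
    t' ∈ cubicRoots β ↔ t' = t ∨ t ^ 2 * t' ^ 2 = t + t' := by
  have ht0 : t ≠ 0 := by rintro rfl; simp at ht
  rw [mem_cubicRoots] at *
  have key : t ^ 2 * (t' ^ 3 + β * t' ^ 2 + 1) = (t' - t) * (t ^ 2 * t' ^ 2 - (t + t')) := by
    linear_combination t' ^ 2 * ht
  rw [← mul_right_inj' (pow_ne_zero 2 ht0), mul_zero, key, mul_eq_zero, sub_eq_zero, sub_eq_zero]

variable [CharP F 2]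

theorem mem_cubicRoots_iff_eq_div {β t : F} :
    t ∈ cubicRoots β ↔ t ≠ 0 ∧ β = (t ^ 3 + 1) / t ^ 2 := by
  rcases eq_or_ne t 0 with rfl | ht0
  · simp
  · rw [mem_cubicRoots, eq_div_iff (pow_ne_zero 2 ht0), add_right_comm, CharTwo.add_eq_zero]
    exact ⟨fun h => ⟨ht0, h.symm⟩, fun h => h.2.symm⟩

theorem ne_of_mem_cubicRoots {β t : F} (ht : t ∈ cubicRoots β) : t ≠ β := by
  rintro rfl
  rw [mem_cubicRoots] at ht
  exact one_ne_zero (by linear_combination ht - t ^ 3 * CharTwo.two_eq_zero (R := F))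

theorem card_cubicRoots_ne_two (β : F) : #(cubicRoots β) ≠ 2 := by
  intro h
  obtain ⟨t, t', hne, hR⟩ := card_eq_two.mp h
  have ht : t ∈ cubicRoots β := hR ▸ mem_insert_self t {t'}
  have ht' : t' ∈ cubicRoots β := hR ▸ mem_insert_of_mem (mem_singleton_self t')
  have h3 := neg_sub_sub_mem_cubicRoots ht ht' hne
  rw [hR, mem_insert, mem_singleton] at h3
  have h2 : (2 : F) = 0 := CharTwo.two_eq_zero
  -- in characteristic two, `-β - t - t' = t` says `t' = β`
  rcases h3 with h | h
  · exact ne_of_mem_cubicRoots ht' (by linear_combination -h - (β + t) * h2)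
  · exact ne_of_mem_cubicRoots ht (by linear_combination -h - (β + t') * h2)

theorem sum_sum_cubicRoots {M : Type*} [AddCommMonoid M] (f : F → F → M) :
    ∑ β, ∑ t ∈ cubicRoots β, f β t = ∑ t ∈ univ.erase 0, f ((t ^ 3 + 1) / t ^ 2) t :=
  (sum_comm' fun β t => by
    simp only [mem_univ, true_and, mem_cubicRoots_iff_eq_div, mem_singleton, mem_erase,
      and_comm]).trans (sum_congr rfl fun _ _ => sum_singleton _ _)

theorem sum_card_cubicRoots : ∑ β : F, #(cubicRoots β) = Fintype.card F - 1 := by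
  simp_rw [card_eq_sum_ones]
  rw [sum_sum_cubicRoots, ← card_eq_sum_ones, card_erase_of_mem (mem_univ _), card_univ]

theorem card_cubicRoots_erase {β t : F} (ht : t ∈ cubicRoots β) :
    #((cubicRoots β).erase t) = #{x | x ^ 2 + x = t ^ 3} := by
  have ht0 : t ≠ 0 := (mem_cubicRoots_iff_eq_div.mp ht).1
  have ht2 : t ^ 2 ≠ 0 := pow_ne_zero 2 ht0
  have key (t' : F) : t' ∈ (cubicRoots β).erase t ↔ (t ^ 2 * t') ^ 2 + t ^ 2 * t' = t ^ 3 := by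
    have hsq : (t ^ 2 * t') ^ 2 + t ^ 2 * t' = t ^ 3 ↔ t ^ 2 * t' ^ 2 = t + t' := by
      have : (t ^ 2 * t') ^ 2 + t ^ 2 * t' - t ^ 3 = t ^ 2 * (t ^ 2 * t' ^ 2 - (t + t')) := by
        linear_combination t ^ 2 * t' * CharTwo.two_eq_zero (R := F)
      rw [← sub_eq_zero, this, mul_eq_zero, or_iff_right ht2, sub_eq_zero]
    rw [mem_erase, mem_cubicRoots_iff_of_mem ht, hsq]
    refine ⟨fun h => h.2.resolve_left h.1, fun h => ⟨?_, Or.inr h⟩⟩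
    rintro rfl
    rw [CharTwo.add_self_eq_zero, ← pow_add, pow_eq_zero_iff (by norm_num)] at h
    exact ht0 h
  refine card_nbij' (t ^ 2 * ·) (· / t ^ 2) (fun t' h => ?_) (fun x h => ?_) (fun t' _ => ?_)
    (fun x _ => ?_)
  · simpa using (key t').mp h
  · apply (key _).mpr
    rw [mul_div_cancel₀ _ ht2]
    simpa using h
  · exact mul_div_cancel_left₀ t' ht2
  · exact mul_div_cancel₀ x ht2

end Cubic

section Count

variable {F : Type*} [Field F] [Fintype F] [DecidableEq F] [Algebra (ZMod 2) F]

local notation "Tr" => Algebra.trace (ZMod 2) F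

theorem sum_card_cubicRoots_mul_pred :
    ∑ β : F, #(cubicRoots β) * (#(cubicRoots β) - 1)
      = 2 * #{t ∈ univ.erase 0 | Tr (t ^ 3) = 0} := by
  have : CharP F 2 := charP_of_injective_algebraMap' (ZMod 2) 2
  calc ∑ β : F, #(cubicRoots β) * (#(cubicRoots β) - 1)
      = ∑ β : F, ∑ t ∈ cubicRoots β, #((cubicRoots β).erase t) := by
        refine sum_congr rfl fun β _ => ?_
        rw [sum_congr rfl fun t ht => card_erase_of_mem ht, sum_const, smul_eq_mul]
    _ = ∑ t ∈ (univ : Finset F).erase 0, #{x | x ^ 2 + x = t ^ 3} := by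
        rw [sum_sum_cubicRoots]
        exact sum_congr rfl fun t ht =>
          card_cubicRoots_erase (mem_cubicRoots_iff_eq_div.mpr ⟨ne_of_mem_erase ht, rfl⟩)
    _ = 2 * #{t ∈ univ.erase 0 | Tr (t ^ 3) = 0} := by
        simp_rw [card_sq_add_self_eq]
        rw [sum_ite, sum_const_zero, add_zero, sum_const, smul_eq_mul, mul_comm]

theorem card_trace_cube_eq_zero_add_card_trace_cube_eq_one :
    #{t ∈ univ.erase 0 | Tr (t ^ 3) = 0} + #{β : F | Tr (β ^ 3) = 1} = Fintype.card F - 1 := by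
  have hone : #{t ∈ univ.erase 0 | ¬Tr (t ^ 3) = 0} = #{β : F | Tr (β ^ 3) = 1} := by
    congr 1
    ext t
    simp only [mem_filter, mem_erase, mem_univ, and_true, true_and, zmod_two_ne_zero_iff_eq_one,
      and_iff_right_iff_imp]
    rintro h rfl
    simp at h
  rw [← hone, card_filter_add_card_filter_not, card_erase_of_mem (mem_univ _), card_univ]

theorem card_cubicRoots_eq_one :
    #{β : F | #(cubicRoots β) = 1} = #{β : F | Tr (β ^ 3) = 1} := by
  have : CharP F 2 := charP_of_injective_algebraMap' (ZMod 2) 2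
  have hk : ∀ β : F, 2 * (if #(cubicRoots β) = 1 then 1 else 0)
      + #(cubicRoots β) * (#(cubicRoots β) - 1) = 2 * #(cubicRoots β) := by
    intro β
    obtain h | h | h : #(cubicRoots β) = 0 ∨ #(cubicRoots β) = 1 ∨ #(cubicRoots β) = 3 := by
      have := card_cubicRoots_le_three β
      have := card_cubicRoots_ne_two β
      omega
    all_goals simp [h]
  have hsum := sum_congr rfl fun β (_ : β ∈ univ) => hk β
  rw [sum_add_distrib, ← mul_sum, ← mul_sum, ← card_filter, sum_card_cubicRoots,
    sum_card_cubicRoots_mul_pred] at hsum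
  have := card_trace_cube_eq_zero_add_card_trace_cube_eq_one (F := F)
  omega

end Count

theorem stmt4_general (m : ℕ) :
    ({β : GaloisField 2 (2 * m) |
        ({t : GaloisField 2 (2 * m) | t ^ 3 + β * t ^ 2 + 1 = 0} :
          Set (GaloisField 2 (2 * m))).ncard = 2} : Set (GaloisField 2 (2 * m))).ncard = 0 ∧
    ({β : GaloisField 2 (2 * m) |
        ({t : GaloisField 2 (2 * m) | t ^ 3 + β * t ^ 2 + 1 = 0} :
          Set (GaloisField 2 (2 * m))).ncard = 1} : Set (GaloisField 2 (2 * m))).ncard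
      = ({β : GaloisField 2 (2 * m) |
          Algebra.trace (ZMod 2) (GaloisField 2 (2 * m)) (β ^ 3) = 1} :
            Set (GaloisField 2 (2 * m))).ncard := by
  classical
  let _ : Fintype (GaloisField 2 (2 * m)) := Fintype.ofFinite _
  have hroots (β : GaloisField 2 (2 * m)) :
      ({t | t ^ 3 + β * t ^ 2 + 1 = 0} : Set _).ncard = #(cubicRoots β) := by
    rw [← Set.ncard_coe_finset]
    congr 1
    ext t
    simp
  simp only [hroots, card_cubicRoots_ne_two, Set.ofPred_false, Set.ncard_empty, true_and]
  simpa only [Set.ncard_eq_toFinset_card', Set.toFinset_ofPred] using card_cubicRoots_eq_one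

/-- Let `q = 2^(2m)` with `m ≥ 1`. Then there is no `β ∈ F_q` for which
`t³ + βt² + 1` has exactly two roots in `F_q`, and the number of `β ∈ F_q` for which it
has exactly one root in `F_q` equals the number of `β ∈ F_q` with `Tr(β³) = 1`, where
`Tr` is the absolute trace `F_q → F_2`. -/
theorem stmt4 (m : ℕ) (hm : 1 ≤ m) :
    ({β : GaloisField 2 (2 * m) |
        ({t : GaloisField 2 (2 * m) | t ^ 3 + β * t ^ 2 + 1 = 0} :
          Set (GaloisField 2 (2 * m))).ncard = 2} : Set (GaloisField 2 (2 * m))).ncard = 0 ∧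
    ({β : GaloisField 2 (2 * m) |
        ({t : GaloisField 2 (2 * m) | t ^ 3 + β * t ^ 2 + 1 = 0} :
          Set (GaloisField 2 (2 * m))).ncard = 1} : Set (GaloisField 2 (2 * m))).ncard
      = ({β : GaloisField 2 (2 * m) |
          Algebra.trace (ZMod 2) (GaloisField 2 (2 * m)) (β ^ 3) = 1} :
            Set (GaloisField 2 (2 * m))).ncard :=
  stmt4_general m
end

section
/- Let q ≥ 8 be an even prime power and μ ∈ F_q^* with μ ≠ 1. Then the number of points of the line ℓ_μ that lie in exactly one osculating plane of the twisted cubic equals the number of γ ∈ F_q such that the cubic t³ + γt² + μt + γ has exactly one root in F_q. -/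
/-- The osculating plane `π_osc(t)` of the twisted cubic, as a subset of `F_q⁴`:
for `t ∈ F_q` it is `{x | x₀ - 3t·x₁ + 3t²·x₂ - t³·x₃ = 0}`, and
`π_osc(∞)` is `{x | x₃ = 0}`. -/
def oscSet {F : Type*} [Field F] : Option F → Set (Fin 4 → F)
  | none => {x | x 3 = 0}
  | some t => {x | x 0 - 3 * t * x 1 + 3 * t ^ 2 * x 2 - t ^ 3 * x 3 = 0}

/-!
A point of `ℓ_μ` other than `⟨(1,0,1,0)⟩` is `⟨(γ,μ,γ,1)⟩`; in characteristic 2 it lies on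
`π_osc(t)` exactly when `t³ + γt² + μt + γ = 0`, and never on `π_osc(∞)`. Distinct
parameters give distinct planes (`P(τ)` lies on `π_osc(σ)` only for `σ = τ`, as
`(t - s)³ = 0` forces `t = s`), so the number of osculating planes through `⟨(γ,μ,γ,1)⟩` is the
number of roots of that cubic, while `⟨(1,0,1,0)⟩` lies on exactly two of them, `π_osc(1)` and
`π_osc(∞)`, because `1 + 3t² = (1 + t)²` in characteristic 2.
-/

open Submodule

variable {F : Type*} [Field F]

def oscSubspace (τ : Option F) : Submodule F (Fin 4 → F) where
  carrier := oscSet τ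
  add_mem' := by
    cases τ <;> simp only [oscSet, Set.mem_ofPred_eq, Pi.add_apply] <;> intro x y hx hy <;>
      linear_combination hx + hy
  zero_mem' := by cases τ <;> simp [oscSet]
  smul_mem' := by
    cases τ <;> simp only [oscSet, Set.mem_ofPred_eq, Pi.smul_apply, smul_eq_mul] <;>
      intro c x hx <;> linear_combination c * hx

theorem span_singleton_subset_oscSet_iff (τ : Option F) (v : Fin 4 → F) :
    ((F ∙ v : Submodule F (Fin 4 → F)) : Set (Fin 4 → F)) ⊆ oscSet τ ↔ v ∈ oscSet τ :=
  span_singleton_le_iff_mem (p := oscSubspace τ) v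

def twistedCubicPoint : Option F → Fin 4 → F
  | none => ![1, 0, 0, 0]
  | some t => ![t ^ 3, t ^ 2, t, 1]

theorem twistedCubicPoint_mem_oscSet_iff (τ σ : Option F) :
    twistedCubicPoint τ ∈ oscSet σ ↔ τ = σ := by
  cases τ with
  | none => cases σ <;> simp [twistedCubicPoint, oscSet]
  | some t =>
    cases σ with
    | none => simp [twistedCubicPoint, oscSet]
    | some s =>
      simp only [twistedCubicPoint, oscSet, Set.mem_ofPred_eq, Matrix.cons_val_zero,
        Matrix.cons_val_one, Matrix.cons_val_two, Matrix.cons_val_three, Option.some.injEq]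
      calc t ^ 3 - 3 * s * t ^ 2 + 3 * s ^ 2 * t - s ^ 3 * 1 = 0 ↔ (t - s) ^ 3 = 0 := by
            ring_nf
        _ ↔ t = s := by rw [pow_eq_zero_iff three_ne_zero, sub_eq_zero]

theorem oscSet_injective : Function.Injective (oscSet : Option F → Set (Fin 4 → F)) :=
  fun τ σ h ↦ (twistedCubicPoint_mem_oscSet_iff τ σ).mp
    (h ▸ (twistedCubicPoint_mem_oscSet_iff τ τ).mpr rfl)

def oscPlanesThrough (p : Submodule F (Fin 4 → F)) : Set (Set (Fin 4 → F)) :=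
  {π | (∃ τ : Option F, π = oscSet τ) ∧ (p : Set (Fin 4 → F)) ⊆ π}

theorem ncard_oscPlanesThrough_span_singleton (v : Fin 4 → F) :
    (oscPlanesThrough (F ∙ v)).ncard = {τ : Option F | v ∈ oscSet τ}.ncard := by
  have : oscPlanesThrough (F ∙ v) = oscSet '' {τ | v ∈ oscSet τ} := by
    ext π
    simp only [oscPlanesThrough, Set.mem_ofPred_eq, Set.mem_image]
    constructor
    · rintro ⟨⟨τ, rfl⟩, hv⟩
      exact ⟨τ, (span_singleton_subset_oscSet_iff τ v).mp hv, rfl⟩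
    · rintro ⟨τ, hv, rfl⟩
      exact ⟨⟨τ, rfl⟩, (span_singleton_subset_oscSet_iff τ v).mpr hv⟩
  rw [this, Set.ncard_image_of_injective _ oscSet_injective]

theorem injOn_span_singleton_of_apply_eq_one {ι : Type*} (i : ι) :
    Set.InjOn (fun v : ι → F ↦ F ∙ v) {v | v i = 1} := by
  intro v hv w hw h
  obtain ⟨c, rfl⟩ := span_singleton_eq_span_singleton.mp h
  have hc : c = 1 := Units.ext (by simpa [Units.smul_def, hv.out] using hw)
  rw [hc, one_smul]

section CharTwo

variable [CharP F 2]

theorem setOf_mem_oscSet_eq_image_some_roots (γ μ : F) :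
    {τ : Option F | ![γ, μ, γ, 1] ∈ oscSet τ}
      = some '' {t : F | t ^ 3 + γ * t ^ 2 + μ * t + γ = 0} := by
  ext τ
  cases τ with
  | none => simp [oscSet]
  | some t =>
    have h2 : (2 : F) = 0 := CharTwo.two_eq_zero
    simp only [oscSet, Set.mem_ofPred_eq, Matrix.cons_val_zero, Matrix.cons_val_one,
      Matrix.head_cons, Matrix.cons_val_two, Matrix.tail_cons, Matrix.cons_val_three,
      Set.mem_image, Option.some.injEq, exists_eq_right]
    constructor <;> intro h
    · linear_combination h + (t ^ 3 - γ * t ^ 2 + 2 * μ * t) * h2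
    · linear_combination h - (t ^ 3 - γ * t ^ 2 + 2 * μ * t) * h2

theorem setOf_mem_oscSet_one_zero_one_zero :
    {τ : Option F | ![1, 0, 1, 0] ∈ oscSet τ} = {none, some 1} := by
  ext τ
  cases τ with
  | none => simp [oscSet]
  | some t =>
    have h2 : (2 : F) = 0 := CharTwo.two_eq_zero
    simp only [oscSet, Set.mem_ofPred_eq, Matrix.cons_val_zero, Matrix.cons_val_one,
      Matrix.head_cons, Matrix.cons_val_two, Matrix.tail_cons, Matrix.cons_val_three,
      Set.mem_insert_iff, Set.mem_singleton_iff, reduceCtorEq, Option.some.injEq, false_or]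
    calc 1 - 3 * t * 0 + 3 * t ^ 2 * 1 - t ^ 3 * 0 = 0 ↔ (t - 1) ^ 2 = 0 := by
          constructor <;> intro h
          · linear_combination h - (t ^ 2 + t) * h2
          · linear_combination h + (t ^ 2 + t) * h2
      _ ↔ t = 1 := by rw [pow_eq_zero_iff two_ne_zero, sub_eq_zero]

theorem ncard_setOf_oscPlanesThrough_ncard_eq_one (μ : F) :
    {p ∈ {p | p = F ∙ ![1, 0, 1, 0] ∨ ∃ γ : F, p = F ∙ ![γ, μ, γ, 1]} |
        (oscPlanesThrough p).ncard = 1}.ncard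
      = {γ : F | {t : F | t ^ 3 + γ * t ^ 2 + μ * t + γ = 0}.ncard = 1}.ncard := by
  have h_inf : (oscPlanesThrough (F ∙ ![1, 0, 1, 0])).ncard = 2 := by
    rw [ncard_oscPlanesThrough_span_singleton, setOf_mem_oscSet_one_zero_one_zero,
      Set.ncard_pair (by simp)]
  have h_affine (γ : F) : (oscPlanesThrough (F ∙ ![γ, μ, γ, 1])).ncard
      = {t : F | t ^ 3 + γ * t ^ 2 + μ * t + γ = 0}.ncard := by
    rw [ncard_oscPlanesThrough_span_singleton, setOf_mem_oscSet_eq_image_some_roots,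
      Set.ncard_image_of_injective _ (Option.some_injective F)]
  have h_eq : {p ∈ {p | p = F ∙ ![1, 0, 1, 0] ∨ ∃ γ : F, p = F ∙ ![γ, μ, γ, 1]} |
        (oscPlanesThrough p).ncard = 1}
      = (fun γ : F ↦ F ∙ ![γ, μ, γ, 1]) ''
          {γ | {t : F | t ^ 3 + γ * t ^ 2 + μ * t + γ = 0}.ncard = 1} := by
    ext p
    simp only [Set.mem_ofPred_eq, Set.mem_image]
    constructor
    · rintro ⟨rfl | ⟨γ, rfl⟩, h⟩
      · simp [h_inf] at h
      · exact ⟨γ, h_affine γ ▸ h, rfl⟩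
    · rintro ⟨γ, h, rfl⟩
      exact ⟨Or.inr ⟨γ, rfl⟩, (h_affine γ).trans h⟩
  have h_inj : Function.Injective (fun γ : F ↦ F ∙ ![γ, μ, γ, 1]) := fun a b h ↦
    congrFun (injOn_span_singleton_of_apply_eq_one 3 rfl rfl h) 0
  rw [h_eq, Set.ncard_image_of_injective _ h_inj]

end CharTwo

theorem stmt17_general (n : ℕ) (μ : GaloisField 2 n) :
    let F := GaloisField 2 n
    let linePts : Set (Submodule F (Fin 4 → F)) :=
      {p | p = Submodule.span F {![1, 0, 1, 0]} ∨
        ∃ γ : F, p = Submodule.span F {![γ, μ, γ, 1]}}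
    let numOsc : Submodule F (Fin 4 → F) → ℕ := fun p =>
      Set.ncard {π : Set (Fin 4 → F) |
        (∃ τ : Option F, π = oscSet τ) ∧ (p : Set (Fin 4 → F)) ⊆ π}
    Set.ncard {p ∈ linePts | numOsc p = 1}
      = Set.ncard {γ : F |
          ({t : F | t ^ 3 + γ * t ^ 2 + μ * t + γ = 0} : Set F).ncard = 1} :=
  ncard_setOf_oscPlanesThrough_ncard_eq_one μ

/-- Let `q = 2^n ≥ 8` be an even prime power and `μ ∈ F_q^*`, `μ ≠ 1`.
Then the number of points of the line `ℓ_μ` lying in exactly one osculating plane of the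
twisted cubic equals the number of `γ ∈ F_q` such that `t³ + γt² + μt + γ` has exactly
one root in `F_q`. -/
theorem stmt17 (n : ℕ) (hn : 3 ≤ n) (μ : GaloisField 2 n) (hμ0 : μ ≠ 0) (hμ1 : μ ≠ 1) :
    let F := GaloisField 2 n
    let linePts : Set (Submodule F (Fin 4 → F)) :=
      {p | p = Submodule.span F {![1, 0, 1, 0]} ∨
        ∃ γ : F, p = Submodule.span F {![γ, μ, γ, 1]}}
    let numOsc : Submodule F (Fin 4 → F) → ℕ := fun p =>
      Set.ncard {π : Set (Fin 4 → F) |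
        (∃ τ : Option F, π = oscSet τ) ∧ (p : Set (Fin 4 → F)) ⊆ π}
    Set.ncard {p ∈ linePts | numOsc p = 1}
      = Set.ncard {γ : F |
          ({t : F | t ^ 3 + γ * t ^ 2 + μ * t + γ = 0} : Set F).ncard = 1} :=
  stmt17_general n μ
end
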